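/- For the solenoid map with contraction a ∈ (0, 1/4), the k-th image f_S^k(𝕋_S) intersects each cross-sectional disk {φ} × D² in exactly 2^k disjoint disks, each of radius a^k, whose centers are the points v_k^{Γ} = a^k v_0 + Σ_{i=1}^{k} (a^{k−i}/2)·\bar{φ}_{i−1}^{Γ} indexed by binary sequences Γ ∈ {0,1}^k; in particular any two of these 2^k disks are pairwise disjoint. -/

import Mathlib

open Metric Set

/-- The solenoid map `f_S(φ, v) = (2φ mod 2π, a·v + φ̄/2)` on the solid torus,
written with the disk coordinate `v ∈ ℂ` and `φ̄ = e^{iφ}`. -/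
noncomputable def solenoidMap (a : ℝ) (p : Real.Angle × ℂ) : Real.Angle × ℂ :=
  ((2 : ℕ) • p.1, a * p.2 + Complex.exp (p.1.toReal * Complex.I) / 2)

/-- The open solid torus `𝕋_S = S¹ × D²`. -/
def solidTorus : Set (Real.Angle × ℂ) := {p | ‖p.2‖ < 1}

/-- The intermediate angles `θ_j` (with `θ_k = φ`, `θ_j = θ_{j+1}/2 + Γ_j·π`) of the
branch of `k`-th preimages of the angle `φ` under the doubling map selected by the
binary sequence `Γ ∈ {0,1}^k`. -/
noncomputable def solAngle (φ : ℝ) (k : ℕ) (Γ : Fin k → Bool) (j : ℕ) : ℝ :=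
  φ / 2 ^ (k - j) +
    ∑ i ∈ Finset.univ.filter fun i : Fin k => j ≤ (i : ℕ),
      (if Γ i then (1:ℝ) else 0) * Real.pi / 2 ^ ((i : ℕ) - j)

/-- The center `v_k^Γ = Σ_{i=1}^k (a^{k−i}/2)·φ̄_{i−1}^Γ` of the branch disk of
`f_S^k(𝕋_S)` in the cross-sectional disk at angle `φ`, indexed by `Γ ∈ {0,1}^k`. -/
noncomputable def solCenter (a φ : ℝ) (k : ℕ) (Γ : Fin k → Bool) : ℂ :=
  ∑ j ∈ Finset.range k,
    ((a ^ (k - 1 - j) / 2 : ℝ) : ℂ) * Complex.exp (solAngle φ k Γ j * Complex.I)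

/-!
The `k`-th iterate sends `(θ, v)` to `(2^k θ, a^k v + ∑_{j<k} (a^(k-1-j)/2) e^{i 2^j θ})`. The
`2^k` solutions of `2^k θ = φ` are the angles `solAngle φ k Γ 0`, obtained by choosing one of the
two halves of an angle at each step, and along such a branch the sum above is `solCenter a φ k Γ`;
so the fibre over `φ` is the union of the balls of radius `a^k` around these centres. If two
branches last differ at index `m`, their `m`-th intermediate angles differ by `π`, so the `m`-th
terms of the two centres differ by `a^(k-1-m)`, which dominates the geometric tail of the earlier
terms when `a ≤ 1/4` and keeps the centres `2 a^k` apart.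
-/

open Real

lemma exists_ne_forall_lt_eq {ι β : Type*} [Fintype ι] [LinearOrder ι] {f g : ι → β}
    (h : f ≠ g) : ∃ m, f m ≠ g m ∧ ∀ i, m < i → f i = g i := by
  classical
  obtain ⟨i₀, hi₀⟩ := Function.ne_iff.mp h
  obtain ⟨m, hm, hmax⟩ := (Finset.univ.filter fun i => f i ≠ g i).exists_max_image id
    ⟨i₀, Finset.mem_filter.mpr ⟨Finset.mem_univ _, hi₀⟩⟩
  refine ⟨m, (Finset.mem_filter.mp hm).2, fun i hi => ?_⟩
  by_contra hne
  exact (hmax i (Finset.mem_filter.mpr ⟨Finset.mem_univ _, hne⟩)).not_gt hi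

lemma sum_range_pow_sub_le {a : ℝ} (ha0 : 0 ≤ a) (ha1 : a < 1) (m : ℕ) :
    ∑ j ∈ Finset.range m, a ^ (m - j) ≤ a / (1 - a) := by
  calc ∑ j ∈ Finset.range m, a ^ (m - j) = ∑ j ∈ Finset.Ico 1 (m + 1), a ^ j := by
        rw [Finset.sum_Ico_eq_sum_range, Nat.add_sub_cancel, ← Finset.sum_range_reflect]
        exact Finset.sum_congr rfl fun j hj => by
          rw [Finset.mem_range] at hj; congr 1; omega
    _ ≤ a ^ 1 / (1 - a) := geom_sum_Ico_le_of_lt_one ha0 ha1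
    _ = a / (1 - a) := by rw [pow_one]

lemma norm_mul_one_sub_le_norm_sum_range_succ {E : Type*} [SeminormedAddCommGroup E] {a : ℝ}
    (ha0 : 0 ≤ a) (ha1 : a < 1) {m : ℕ} (z : ℕ → E)
    (hz : ∀ j < m, ‖z j‖ ≤ ‖z m‖ * a ^ (m - j)) :
    ‖z m‖ * (1 - a / (1 - a)) ≤ ‖∑ j ∈ Finset.range (m + 1), z j‖ := by
  have htail : ∑ j ∈ Finset.range m, ‖z j‖ ≤ ‖z m‖ * (a / (1 - a)) := by
    calc ∑ j ∈ Finset.range m, ‖z j‖ ≤ ∑ j ∈ Finset.range m, ‖z m‖ * a ^ (m - j) :=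
          Finset.sum_le_sum fun j hj => hz j (Finset.mem_range.mp hj)
      _ ≤ ‖z m‖ * (a / (1 - a)) := by
          rw [← Finset.mul_sum]
          exact mul_le_mul_of_nonneg_left (sum_range_pow_sub_le ha0 ha1 m) (norm_nonneg _)
  calc ‖z m‖ * (1 - a / (1 - a)) ≤ ‖z m‖ - ‖∑ j ∈ Finset.range m, z j‖ := by
        linarith [norm_sum_le (Finset.range m) z]
    _ ≤ ‖∑ j ∈ Finset.range (m + 1), z j‖ := by
        rw [Finset.sum_range_succ, add_comm]
        exact norm_sub_le_norm_add _ _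

lemma Complex.mem_ball_iff_exists_mem_unitBall {c w : ℂ} {r : ℝ} (hr : 0 < r) :
    w ∈ ball c r ↔ ∃ v ∈ ball (0 : ℂ) 1, (r : ℂ) * v + c = w := by
  rw [← affinity_unitBall hr]
  simp only [Set.mem_vadd_set, Set.mem_smul_set, vadd_eq_add, Complex.real_smul,
    exists_exists_and_eq_and, add_comm]

lemma Real.Angle.exp_toReal_mul_I (θ : Real.Angle) :
    Complex.exp (θ.toReal * Complex.I) = θ.toCircle := by
  rw [← Circle.coe_exp, ← Real.Angle.toCircle_coe, Real.Angle.coe_toReal]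

lemma solenoidMap_iterate_fst (a : ℝ) (k : ℕ) (p : Real.Angle × ℂ) :
    ((solenoidMap a)^[k] p).1 = (2 ^ k : ℕ) • p.1 := by
  induction k with
  | zero => simp
  | succ k ih => rw [Function.iterate_succ_apply', solenoidMap, ih, smul_smul, pow_succ']

lemma solenoidMap_iterate_snd (a : ℝ) (k : ℕ) (p : Real.Angle × ℂ) :
    ((solenoidMap a)^[k] p).2 = (a : ℂ) ^ k * p.2 +
      ∑ j ∈ Finset.range k, ((a ^ (k - 1 - j) / 2 : ℝ) : ℂ) * ((2 ^ j : ℕ) • p.1).toCircle := by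
  induction k with
  | zero => simp
  | succ k ih =>
    have hweight : ∀ j ∈ Finset.range k, ((a ^ (k + 1 - 1 - j) / 2 : ℝ) : ℂ) =
        a * ((a ^ (k - 1 - j) / 2 : ℝ) : ℂ) := by
      intro j hj
      rw [show k + 1 - 1 - j = k - 1 - j + 1 by have := Finset.mem_range.mp hj; omega, pow_succ']
      push_cast; ring
    rw [Function.iterate_succ_apply', solenoidMap, solenoidMap_iterate_fst, ih,
      Real.Angle.exp_toReal_mul_I, Finset.sum_range_succ, Finset.sum_congr rfl fun j hj =>
        congrArg (· * _) (hweight j hj)]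
    simp only [mul_assoc, ← Finset.mul_sum, Complex.ofReal_div, Complex.ofReal_pow,
      Complex.ofReal_ofNat, add_tsub_cancel_right, tsub_self, pow_zero, Complex.ofReal_one]
    ring

section solAngle

variable (φ : ℝ) {k : ℕ}

lemma solAngle_self (Γ : Fin k → Bool) : solAngle φ k Γ k = φ := by
  simp [solAngle, Finset.filter_false_of_mem fun (i : Fin k) _ => not_le.mpr i.isLt]

lemma two_mul_solAngle (Γ : Fin k → Bool) {j : ℕ} (hj : j < k) :
    2 * solAngle φ k Γ j = solAngle φ k Γ (j + 1) + if Γ ⟨j, hj⟩ then 2 * π else 0 := by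
  have hfilter : (Finset.univ.filter fun i : Fin k => j ≤ (i : ℕ)) =
      insert ⟨j, hj⟩ (Finset.univ.filter fun i : Fin k => j + 1 ≤ (i : ℕ)) := by
    ext i
    simp only [Finset.mem_filter, Finset.mem_insert, Finset.mem_univ, true_and, Fin.ext_iff]
    omega
  have hsucc : ∀ n, j < n → (2 : ℝ) ^ (n - j) = 2 * 2 ^ (n - (j + 1)) := fun n hn => by
    rw [← pow_succ']; congr 1; omega
  have hsum : 2 * ∑ i ∈ Finset.univ.filter fun i : Fin k => j + 1 ≤ (i : ℕ),
      (if Γ i then (1 : ℝ) else 0) * π / 2 ^ ((i : ℕ) - j) =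
      ∑ i ∈ Finset.univ.filter fun i : Fin k => j + 1 ≤ (i : ℕ),
      (if Γ i then (1 : ℝ) else 0) * π / 2 ^ ((i : ℕ) - (j + 1)) := by
    rw [Finset.mul_sum]
    refine Finset.sum_congr rfl fun i hi => ?_
    rw [hsucc i (Finset.mem_filter.mp hi).2]
    field_simp
  rw [solAngle, solAngle, hfilter, Finset.sum_insert (by simp), hsucc k hj, ← hsum, Nat.sub_self,
    pow_zero, div_one]
  split_ifs <;> ring

lemma two_pow_nsmul_solAngle_zero (Γ : Fin k → Bool) {j : ℕ} (hj : j ≤ k) :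
    (2 ^ j : ℕ) • (solAngle φ k Γ 0 : Angle) = solAngle φ k Γ j := by
  induction j with
  | zero => simp
  | succ j ih =>
    rw [pow_succ', mul_smul, ih (by omega), ← Angle.coe_nsmul, nsmul_eq_mul, Nat.cast_ofNat,
      two_mul_solAngle φ Γ hj, Angle.coe_add]
    split_ifs <;> simp

lemma solAngle_cons_zero (b : Bool) (Γ : Fin k → Bool) :
    solAngle φ (k + 1) (Fin.cons b Γ) 0 = solAngle φ k Γ 0 / 2 + if b then π else 0 := by
  simp only [solAngle, zero_le, Finset.filter_true, Fin.sum_univ_succ, Fin.cons_zero,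
    Fin.cons_succ, Fin.val_succ, Nat.sub_zero, pow_succ, Fin.val_zero]
  rw [add_div, Finset.sum_div]
  simp only [div_div]
  split_ifs <;> ring

lemma exists_solAngle_eq (θ : Angle) (hθ : (2 ^ k : ℕ) • θ = φ) :
    ∃ Γ : Fin k → Bool, θ = solAngle φ k Γ 0 := by
  induction k generalizing θ with
  | zero => exact ⟨Fin.elim0, by simpa [solAngle] using hθ⟩
  | succ k ih =>
    obtain ⟨Γ, hΓ⟩ := ih (2 • θ) (by rwa [smul_smul, ← pow_succ])
    have hhalf : (2 : ℕ) • θ = (2 : ℕ) • (solAngle φ (k + 1) (Fin.cons false Γ) 0 : Angle) := by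
      rw [hΓ, ← Angle.coe_nsmul, solAngle_cons_zero, if_neg Bool.false_ne_true, add_zero,
        nsmul_eq_mul, Nat.cast_ofNat, mul_div_cancel₀ _ two_ne_zero]
    rcases Angle.two_nsmul_eq_iff.mp hhalf with h | h
    · exact ⟨Fin.cons false Γ, h⟩
    · refine ⟨Fin.cons true Γ, ?_⟩
      rw [h, solAngle_cons_zero, solAngle_cons_zero]
      simp

lemma solAngle_congr {Γ Γ' : Fin k → Bool} {j : ℕ} (h : ∀ i : Fin k, j ≤ i → Γ i = Γ' i) :
    solAngle φ k Γ j = solAngle φ k Γ' j := by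
  unfold solAngle
  congr 1
  exact Finset.sum_congr rfl fun i hi => by rw [h i (Finset.mem_filter.mp hi).2]

lemma exp_solAngle_eq_neg {Γ Γ' : Fin k → Bool} {m : Fin k} (hm : Γ m ≠ Γ' m)
    (h : ∀ i, m < i → Γ i = Γ' i) :
    Complex.exp (solAngle φ k Γ' m * Complex.I) = -Complex.exp (solAngle φ k Γ m * Complex.I) := by
  have hnext : solAngle φ k Γ (m + 1) = solAngle φ k Γ' (m + 1) :=
    solAngle_congr φ fun i hi => h i (Fin.lt_def.mpr hi)
  have h2 := two_mul_solAngle φ Γ m.isLt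
  have h2' := two_mul_solAngle φ Γ' m.isLt
  cases hΓ : Γ m <;> cases hΓ' : Γ' m <;> simp only [hΓ, hΓ', Fin.eta, ne_eq,
    not_true_eq_false, Bool.false_eq_true, Bool.true_eq_false, ↓reduceIte, add_zero] at hm h2 h2'
  · rw [show solAngle φ k Γ' m = solAngle φ k Γ m + π by linarith]
    push_cast
    rw [add_mul, Complex.exp_add_pi_mul_I]
  · rw [show solAngle φ k Γ' m = solAngle φ k Γ m - π by linarith]
    push_cast
    rw [sub_mul, Complex.exp_sub_pi_mul_I]

end solAngle

lemma solenoidMap_iterate_solAngle (a φ : ℝ) {k : ℕ} (Γ : Fin k → Bool) (v : ℂ) :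
    (solenoidMap a)^[k] (solAngle φ k Γ 0, v) = ((φ : Angle), a ^ k * v + solCenter a φ k Γ) := by
  refine Prod.ext ?_ ?_
  · rw [solenoidMap_iterate_fst, two_pow_nsmul_solAngle_zero φ Γ le_rfl, solAngle_self]
  · rw [solenoidMap_iterate_snd, solCenter]
    refine congrArg _ (Finset.sum_congr rfl fun j hj => ?_)
    rw [two_pow_nsmul_solAngle_zero φ Γ (Finset.mem_range.mp hj).le, Angle.toCircle_coe,
      Circle.coe_exp]

lemma two_mul_pow_le_dist_solCenter {a : ℝ} (ha0 : 0 ≤ a) (ha : a ≤ 1 / 4) (φ : ℝ) {k : ℕ}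
    {Γ Γ' : Fin k → Bool} (hΓ : Γ ≠ Γ') :
    2 * a ^ k ≤ dist (solCenter a φ k Γ) (solCenter a φ k Γ') := by
  obtain ⟨m, hm, habove⟩ := exists_ne_forall_lt_eq hΓ
  set d : ℕ → ℂ := fun j => ((a ^ (k - 1 - j) / 2 : ℝ) : ℂ) *
    (Complex.exp (solAngle φ k Γ j * Complex.I) - Complex.exp (solAngle φ k Γ' j * Complex.I))
  have hdiff : solCenter a φ k Γ - solCenter a φ k Γ' = ∑ j ∈ Finset.range (m + 1), d j := by
    rw [solCenter, solCenter, ← Finset.sum_sub_distrib]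
    refine (Finset.sum_subset (Finset.range_subset_range.mpr m.isLt) fun j _ hj => ?_).symm.trans
      (Finset.sum_congr rfl fun j _ => by ring)
    have hmj : (m : ℕ) < j := by simpa using hj
    simp only [solAngle_congr φ fun i hi => habove i (Fin.lt_def.mpr (hmj.trans_le hi)), sub_self]
  have hdm : ‖d m‖ = a ^ (k - 1 - m) := by
    simp only [d, exp_solAngle_eq_neg φ hm habove, sub_neg_eq_add, ← two_mul, norm_mul,
      Complex.norm_real, Complex.norm_exp_ofReal_mul_I, Complex.norm_two, Real.norm_eq_abs,
      abs_of_nonneg (by positivity : 0 ≤ a ^ (k - 1 - m) / 2)]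
    ring
  have hdj : ∀ j < (m : ℕ), ‖d j‖ ≤ ‖d m‖ * a ^ (m - j) := fun j hj => by
    rw [hdm, ← pow_add, show k - 1 - m + (m - j) = k - 1 - j by omega]
    calc ‖d j‖ ≤ a ^ (k - 1 - j) / 2 * (1 + 1) := by
          rw [norm_mul, Complex.norm_real, Real.norm_eq_abs, abs_of_nonneg (by positivity)]
          gcongr
          exact (norm_sub_le _ _).trans_eq (by simp [Complex.norm_exp_ofReal_mul_I])
      _ = a ^ (k - 1 - j) := by ring
  have hsplit : a ^ k = a ^ (k - 1 - m) * a ^ ((m : ℕ) + 1) := by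
    rw [← pow_add]; congr 1; omega
  have ha_small : 2 * a ≤ 1 - a / (1 - a) := by
    rw [le_sub_iff_add_le, ← le_sub_iff_add_le', div_le_iff₀ (by linarith)]
    nlinarith
  calc 2 * a ^ k ≤ a ^ (k - 1 - m) * (2 * a) := by
        rw [hsplit, mul_left_comm]
        gcongr
        exact pow_le_of_le_one ha0 (by linarith) (Nat.succ_ne_zero m)
    _ ≤ ‖d m‖ * (1 - a / (1 - a)) := by
        rw [hdm]
        exact mul_le_mul_of_nonneg_left ha_small (by positivity)
    _ ≤ dist (solCenter a φ k Γ) (solCenter a φ k Γ') := by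
        rw [dist_eq_norm, hdiff]
        exact norm_mul_one_sub_le_norm_sum_range_succ ha0 (by linarith) d hdj

/-- For `0 < a < 1/4`, the `k`-th image of the solid torus under the solenoid map meets
the cross-sectional disk at angle `φ` in exactly the `2^k` disks of radius `a^k`
centered at the points `v_k^Γ`, `Γ ∈ {0,1}^k`, and these disks are pairwise disjoint. -/
theorem solenoid_cross_section_disks
    (a : ℝ) (ha : a ∈ Set.Ioo (0:ℝ) (1/4)) (φ : ℝ) (k : ℕ) :
    (((solenoidMap a)^[k] '' solidTorus) ∩ {p | p.1 = (φ : Real.Angle)} =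
      (fun v : ℂ => ((φ : Real.Angle), v)) ''
        (⋃ Γ : Fin k → Bool, ball (solCenter a φ k Γ) (a ^ k))) ∧
    Pairwise fun Γ Γ' : Fin k → Bool =>
      Disjoint (ball (solCenter a φ k Γ) (a ^ k)) (ball (solCenter a φ k Γ') (a ^ k)) := by
  obtain ⟨ha0, ha4⟩ := ha
  refine ⟨?_, fun Γ Γ' hΓ => ball_disjoint_ball ?_⟩
  · ext ⟨ψ, w⟩
    simp only [mem_inter_iff, mem_image, mem_iUnion, Prod.mk.injEq,
      Complex.mem_ball_iff_exists_mem_unitBall (pow_pos ha0 k)]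
    constructor
    · rintro ⟨⟨⟨θ, v⟩, hv, hθv⟩, rfl⟩
      obtain ⟨Γ, rfl⟩ := exists_solAngle_eq φ θ
        ((solenoidMap_iterate_fst a k (θ, v)).symm.trans (congrArg Prod.fst hθv))
      rw [solenoidMap_iterate_solAngle, Prod.mk.injEq] at hθv
      exact ⟨_, ⟨Γ, v, mem_ball_zero_iff.mpr hv, by push_cast; rfl⟩, hθv⟩
    · rintro ⟨_, ⟨Γ, v, hv, rfl⟩, rfl, rfl⟩
      refine ⟨⟨(solAngle φ k Γ 0, v), mem_ball_zero_iff.mp hv, ?_⟩, rfl⟩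
      rw [solenoidMap_iterate_solAngle]
      push_cast; rfl
  · linarith [two_mul_pow_le_dist_solCenter ha0.le ha4.le φ hΓ]
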